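/- arXiv:2511.05742 — 4 statements merged into one kernel-verified Lean document; each statement's English description precedes it below -/
import Mathlib

section
/- Let H, B, δ, v, β, ξ, γ ≥ 0 and c₀, c₁, c₂, c₃, c₄, h > 0 and M₁, M₂, M₃ ≥ 0 be real constants. Define f : ℝ³ → ℝ³ by f₁(z) = H·c₀·z₂/(z₁ + c₀) − δ·z₁·z₂/(z₁ + c₂) − v·z₁·z₃/(z₁ + c₃), f₂(z) = (B·z₁/(z₁ + c₁) − γ·z₂)·z₂ − β·z₂·z₃/(z₂ + h), and f₃(z) = ξ·β·z₁²·z₂·z₃/((z₁² + c₄²)·(z₂ + h)). Set L₁ = H·M₂/c₀ + δ·M₂/c₂ + v·M₃/c₃ + B·M₂/c₁ + 2·ξ·β·M₁·M₂·M₃/(h·c₄²), L₂ = H·(M₁ + c₀)/c₀ + δ·M₁·(M₁ + c₂)/c₂² + B·M₁/c₁ + 2·γ·M₂ + β·M₃/h + ξ·β·M₁²·M₃/(h·c₄²), L₃ = v·M₁·(M₁ + c₃)/c₃² + β·M₂/h + ξ·β·M₁²·M₂/(h·c₄²), and L = max{L₁, L₂, L₃}. Then for all x = (x₁, x₂, x₃)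 and y = (y₁, y₂, y₃) with 0 ≤ xᵢ, yᵢ ≤ Mᵢ for i = 1, 2, 3, one has ‖f(x) − f(y)‖₁ ≤ L·‖x − y‖₁, where ‖z‖₁ = |z₁| + |z₂| + |z₃|; i.e., f is Lipschitz with constant L on the box Ω = {z ∈ ℝ³ : 0 ≤ zᵢ ≤ Mᵢ, i = 1, 2, 3} with respect to the ℓ¹ norm. -/
/-!
Each term of `f` is a product of factors that are bounded and Lipschitz on the box: on `[0, ∞)` the
map `t ↦ t / (t + c)` is `1/c`-Lipschitz and bounded by `M / c` below `M`, and products are handled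
by `|p q - p' q'| ≤ |p - p'| |q| + |p'| |q - q'|`. Summing the bounds for the three components, the
coefficient of `|xᵢ - yᵢ|` is at most `Lᵢ ≤ L`.
-/

open Set

lemma abs_mul_sub_mul_le (p p' q q' : ℝ) :
    |p * q - p' * q'| ≤ |p - p'| * |q| + |p'| * |q - q'| := by
  calc |p * q - p' * q'| = |(p - p') * q + p' * (q - q')| := by congr 1; ring
    _ ≤ |p - p'| * |q| + |p'| * |q - q'| := by
      rw [← abs_mul, ← abs_mul]; exact abs_add_le _ _

lemma abs_mul_sub_mul_sub_mul_le {a b c p q r : ℝ} (ha : 0 ≤ a) (hb : 0 ≤ b) (hc : 0 ≤ c) :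
    |a * p - b * q - c * r| ≤ a * |p| + b * |q| + c * |r| := by
  calc |a * p - b * q - c * r| ≤ |a * p| + |b * q| + |c * r| :=
        (abs_sub _ _).trans (add_le_add (abs_sub _ _) le_rfl)
    _ = a * |p| + b * |q| + c * |r| := by
      simp only [abs_mul, abs_of_nonneg ha, abs_of_nonneg hb, abs_of_nonneg hc]

lemma abs_le_of_mem_Icc_zero {x M : ℝ} (hx : x ∈ Icc 0 M) : |x| ≤ M :=
  (abs_of_nonneg hx.1).le.trans hx.2

lemma abs_sq_sub_sq_le {a b M : ℝ} (ha : |a| ≤ M) (hb : |b| ≤ M) :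
    |a ^ 2 - b ^ 2| ≤ 2 * M * |a - b| := by
  rw [sq_sub_sq, abs_mul]
  gcongr
  linarith [abs_add_le a b]

lemma div_add_le_div {a c M : ℝ} (ha : 0 ≤ a) (haM : a ≤ M) (hc : 0 < c) :
    a / (a + c) ≤ M / c :=
  div_le_div₀ (ha.trans haM) haM hc (by linarith)

lemma abs_div_add_sub_div_add_le {a a' c : ℝ} (ha : 0 ≤ a) (ha' : 0 ≤ a') (hc : 0 < c) :
    |a / (a + c) - a' / (a' + c)| ≤ |a - a'| / c := by
  have hA : 0 < a + c := by linarith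
  have hA' : 0 < a' + c := by linarith
  have key : a / (a + c) - a' / (a' + c) = c * (a - a') / ((a + c) * (a' + c)) := by
    field_simp; ring
  rw [key, abs_div, abs_mul, abs_of_pos hc, abs_of_pos (mul_pos hA hA')]
  calc c * |a - a'| / ((a + c) * (a' + c)) ≤ c * |a - a'| / (c * c) := by
        gcongr <;> linarith
    _ = |a - a'| / c := by field_simp

lemma abs_mul_div_add_sub_le {a a' b b' c Ma Mb : ℝ} (hc : 0 < c) (ha : 0 ≤ a)
    (ha' : a' ∈ Icc 0 Ma) (hb : |b| ≤ Mb) :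
    |a * b / (a + c) - a' * b' / (a' + c)| ≤ Mb / c * |a - a'| + Ma / c * |b - b'| := by
  have ha'₀ := ha'.1
  have hP' : |a' / (a' + c)| ≤ Ma / c := by
    rw [abs_of_nonneg (by positivity)]; exact div_add_le_div ha'.1 ha'.2 hc
  calc |a * b / (a + c) - a' * b' / (a' + c)|
      = |a / (a + c) * b - a' / (a' + c) * b'| := by rw [div_mul_eq_mul_div, div_mul_eq_mul_div]
    _ ≤ |a / (a + c) - a' / (a' + c)| * |b| + |a' / (a' + c)| * |b - b'| :=
      abs_mul_sub_mul_le _ _ _ _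
    _ ≤ |a - a'| / c * Mb + Ma / c * |b - b'| := by
      gcongr; exact abs_div_add_sub_div_add_le ha ha'.1 hc
    _ = Mb / c * |a - a'| + Ma / c * |b - b'| := by ring

lemma abs_const_mul_div_add_sub_le {a a' b b' c Ma Mb : ℝ} (hc : 0 < c) (ha : 0 ≤ a)
    (ha' : a' ∈ Icc 0 Ma) (hb : |b| ≤ Mb) :
    |c * b / (a + c) - c * b' / (a' + c)| ≤ Mb / c * |a - a'| + (Ma + c) / c * |b - b'| := by
  -- `c b / (a + c) = b - a b / (a + c)`: hence the coefficient `(Ma + c) / c`.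
  have hsplit : ∀ t s : ℝ, 0 ≤ t → c * s / (t + c) = s - t * s / (t + c) := by
    intro t s ht
    have : t + c ≠ 0 := by linarith
    field_simp; ring
  rw [hsplit a b ha, hsplit a' b' ha'.1]
  calc |b - a * b / (a + c) - (b' - a' * b' / (a' + c))|
      = |(b - b') - (a * b / (a + c) - a' * b' / (a' + c))| := by congr 1; ring
    _ ≤ |b - b'| + |a * b / (a + c) - a' * b' / (a' + c)| := abs_sub _ _
    _ ≤ |b - b'| + (Mb / c * |a - a'| + Ma / c * |b - b'|) := by
      gcongr; exact abs_mul_div_add_sub_le hc ha ha' hb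
    _ = Mb / c * |a - a'| + (Ma + c) / c * |b - b'| := by field_simp; ring

lemma abs_sq_div_sq_add_sq_sub_le {a a' c M : ℝ} (hc : c ≠ 0) (ha : |a| ≤ M) (ha' : |a'| ≤ M) :
    |a ^ 2 / (a ^ 2 + c ^ 2) - a' ^ 2 / (a' ^ 2 + c ^ 2)| ≤ 2 * M / c ^ 2 * |a - a'| := by
  calc |a ^ 2 / (a ^ 2 + c ^ 2) - a' ^ 2 / (a' ^ 2 + c ^ 2)| ≤ |a ^ 2 - a' ^ 2| / c ^ 2 :=
        abs_div_add_sub_div_add_le (sq_nonneg a) (sq_nonneg a') (by positivity)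
    _ ≤ 2 * M * |a - a'| / c ^ 2 := by gcongr; exact abs_sq_sub_sq_le ha ha'
    _ = 2 * M / c ^ 2 * |a - a'| := by ring

lemma div_le_mul_add_div_sq {m c : ℝ} (hm : 0 ≤ m) (hc : 0 < c) :
    m / c ≤ m * (m + c) / c ^ 2 := by
  rw [div_le_div_iff₀ hc (by positivity)]
  nlinarith [mul_nonneg (mul_nonneg hm hm) hc.le]

lemma add_mul_le_max_mul {L₁ L₂ L₃ t₁ t₂ t₃ : ℝ} (h₁ : 0 ≤ t₁) (h₂ : 0 ≤ t₂) (h₃ : 0 ≤ t₃) :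
    L₁ * t₁ + L₂ * t₂ + L₃ * t₃ ≤ max (max L₁ L₂) L₃ * (t₁ + t₂ + t₃) := by
  rw [mul_add, mul_add]
  gcongr
  · exact le_max_of_le_left (le_max_left _ _)
  · exact le_max_of_le_left (le_max_right _ _)
  · exact le_max_right _ _

lemma first_component_abs_sub_le {H δ v c₀ c₂ c₃ M₁ M₂ M₃ x₁ x₂ x₃ y₁ y₂ y₃ : ℝ}
    (hH : 0 ≤ H) (hδ : 0 ≤ δ) (hv : 0 ≤ v) (hc₀ : 0 < c₀) (hc₂ : 0 < c₂) (hc₃ : 0 < c₃)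
    (hx₁ : 0 ≤ x₁) (hy₁ : y₁ ∈ Icc 0 M₁) (hx₂ : x₂ ∈ Icc 0 M₂) (hx₃ : x₃ ∈ Icc 0 M₃) :
    |(H * c₀ * x₂ / (x₁ + c₀) - δ * x₁ * x₂ / (x₁ + c₂) - v * x₁ * x₃ / (x₁ + c₃))
      - (H * c₀ * y₂ / (y₁ + c₀) - δ * y₁ * y₂ / (y₁ + c₂) - v * y₁ * y₃ / (y₁ + c₃))|
    ≤ (H * M₂ / c₀ + δ * M₂ / c₂ + v * M₃ / c₃) * |x₁ - y₁|
      + (H * (M₁ + c₀) / c₀ + δ * M₁ * (M₁ + c₂) / c₂ ^ 2) * |x₂ - y₂|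
      + v * M₁ * (M₁ + c₃) / c₃ ^ 2 * |x₃ - y₃| := by
  have hM₁ : 0 ≤ M₁ := hy₁.1.trans hy₁.2
  have hx₂' : |x₂| ≤ M₂ := abs_le_of_mem_Icc_zero hx₂
  have hx₃' : |x₃| ≤ M₃ := abs_le_of_mem_Icc_zero hx₃
  have hH' := abs_const_mul_div_add_sub_le (b' := y₂) hc₀ hx₁ hy₁ hx₂'
  have hδ' := abs_mul_div_add_sub_le (b' := y₂) hc₂ hx₁ hy₁ hx₂'
  have hv' := abs_mul_div_add_sub_le (b' := y₃) hc₃ hx₁ hy₁ hx₃'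
  calc _ = |H * (c₀ * x₂ / (x₁ + c₀) - c₀ * y₂ / (y₁ + c₀))
          - δ * (x₁ * x₂ / (x₁ + c₂) - y₁ * y₂ / (y₁ + c₂))
          - v * (x₁ * x₃ / (x₁ + c₃) - y₁ * y₃ / (y₁ + c₃))| := by congr 1; ring
    _ ≤ H * |c₀ * x₂ / (x₁ + c₀) - c₀ * y₂ / (y₁ + c₀)|
          + δ * |x₁ * x₂ / (x₁ + c₂) - y₁ * y₂ / (y₁ + c₂)|
          + v * |x₁ * x₃ / (x₁ + c₃) - y₁ * y₃ / (y₁ + c₃)| :=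
      abs_mul_sub_mul_sub_mul_le hH hδ hv
    _ ≤ H * (M₂ / c₀ * |x₁ - y₁| + (M₁ + c₀) / c₀ * |x₂ - y₂|)
          + δ * (M₂ / c₂ * |x₁ - y₁| + M₁ / c₂ * |x₂ - y₂|)
          + v * (M₃ / c₃ * |x₁ - y₁| + M₁ / c₃ * |x₃ - y₃|) := by gcongr
    _ ≤ _ := by
      linear_combination (δ * |x₂ - y₂|) * div_le_mul_add_div_sq hM₁ hc₂
        + (v * |x₃ - y₃|) * div_le_mul_add_div_sq hM₁ hc₃

lemma second_component_abs_sub_le {B γ β c₁ h M₁ M₂ M₃ x₁ x₂ x₃ y₁ y₂ y₃ : ℝ}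
    (hB : 0 ≤ B) (hγ : 0 ≤ γ) (hβ : 0 ≤ β) (hc₁ : 0 < c₁) (hh : 0 < h)
    (hx₁ : 0 ≤ x₁) (hy₁ : y₁ ∈ Icc 0 M₁) (hx₂ : x₂ ∈ Icc 0 M₂) (hy₂ : y₂ ∈ Icc 0 M₂)
    (hx₃ : x₃ ∈ Icc 0 M₃) :
    |((B * x₁ / (x₁ + c₁) - γ * x₂) * x₂ - β * x₂ * x₃ / (x₂ + h))
      - ((B * y₁ / (y₁ + c₁) - γ * y₂) * y₂ - β * y₂ * y₃ / (y₂ + h))|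
    ≤ B * M₂ / c₁ * |x₁ - y₁| + (B * M₁ / c₁ + 2 * γ * M₂ + β * M₃ / h) * |x₂ - y₂|
      + β * M₂ / h * |x₃ - y₃| := by
  have hx₂' : |x₂| ≤ M₂ := abs_le_of_mem_Icc_zero hx₂
  have hy₂' : |y₂| ≤ M₂ := abs_le_of_mem_Icc_zero hy₂
  have hx₃' : |x₃| ≤ M₃ := abs_le_of_mem_Icc_zero hx₃
  have hB' := abs_mul_div_add_sub_le (b' := y₂) hc₁ hx₁ hy₁ hx₂'
  have hγ' := abs_sq_sub_sq_le hx₂' hy₂'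
  have hβ' := abs_mul_div_add_sub_le (b' := y₃) hh hx₂.1 hy₂ hx₃'
  calc _ = |B * (x₁ * x₂ / (x₁ + c₁) - y₁ * y₂ / (y₁ + c₁))
          - γ * (x₂ ^ 2 - y₂ ^ 2)
          - β * (x₂ * x₃ / (x₂ + h) - y₂ * y₃ / (y₂ + h))| := by congr 1; ring
    _ ≤ B * |x₁ * x₂ / (x₁ + c₁) - y₁ * y₂ / (y₁ + c₁)|
          + γ * |x₂ ^ 2 - y₂ ^ 2|
          + β * |x₂ * x₃ / (x₂ + h) - y₂ * y₃ / (y₂ + h)| :=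
      abs_mul_sub_mul_sub_mul_le hB hγ hβ
    _ ≤ B * (M₂ / c₁ * |x₁ - y₁| + M₁ / c₁ * |x₂ - y₂|) + γ * (2 * M₂ * |x₂ - y₂|)
          + β * (M₃ / h * |x₂ - y₂| + M₂ / h * |x₃ - y₃|) := by gcongr
    _ = _ := by ring

lemma third_component_abs_sub_le {ξ β c₄ h M₁ M₂ M₃ x₁ x₂ x₃ y₁ y₂ y₃ : ℝ}
    (hξ : 0 ≤ ξ) (hβ : 0 ≤ β) (hc₄ : 0 < c₄) (hh : 0 < h)
    (hx₁ : x₁ ∈ Icc 0 M₁) (hy₁ : y₁ ∈ Icc 0 M₁) (hx₂ : x₂ ∈ Icc 0 M₂) (hy₂ : y₂ ∈ Icc 0 M₂)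
    (hx₃ : x₃ ∈ Icc 0 M₃) :
    |ξ * β * x₁ ^ 2 * x₂ * x₃ / ((x₁ ^ 2 + c₄ ^ 2) * (x₂ + h))
      - ξ * β * y₁ ^ 2 * y₂ * y₃ / ((y₁ ^ 2 + c₄ ^ 2) * (y₂ + h))|
    ≤ 2 * ξ * β * M₁ * M₂ * M₃ / (h * c₄ ^ 2) * |x₁ - y₁|
      + ξ * β * M₁ ^ 2 * M₃ / (h * c₄ ^ 2) * |x₂ - y₂|
      + ξ * β * M₁ ^ 2 * M₂ / (h * c₄ ^ 2) * |x₃ - y₃| := by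
  have hM₁ : 0 ≤ M₁ := hy₁.1.trans hy₁.2
  have hx₁' : |x₁| ≤ M₁ := abs_le_of_mem_Icc_zero hx₁
  have hy₁' : |y₁| ≤ M₁ := abs_le_of_mem_Icc_zero hy₁
  have hx₃' : |x₃| ≤ M₃ := abs_le_of_mem_Icc_zero hx₃
  have hP := abs_sq_div_sq_add_sq_sub_le hc₄.ne' hx₁' hy₁'
  have hP' : |y₁ ^ 2 / (y₁ ^ 2 + c₄ ^ 2)| ≤ M₁ ^ 2 / c₄ ^ 2 := by
    rw [abs_of_nonneg (by positivity)]
    exact div_add_le_div (sq_nonneg y₁) (pow_le_pow_left₀ hy₁.1 hy₁.2 2) (by positivity)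
  have hR : |x₂ * x₃ / (x₂ + h)| ≤ M₂ * M₃ / h := by
    calc |x₂ * x₃ / (x₂ + h)| = x₂ / (x₂ + h) * |x₃| := by
          rw [← div_mul_eq_mul_div, abs_mul, abs_of_nonneg (div_nonneg hx₂.1 (by linarith [hx₂.1]))]
      _ ≤ M₂ / h * M₃ :=
          mul_le_mul (div_add_le_div hx₂.1 hx₂.2 hh) hx₃' (abs_nonneg _)
            (div_nonneg (hx₂.1.trans hx₂.2) hh.le)
      _ = M₂ * M₃ / h := by ring
  have hR' := abs_mul_div_add_sub_le (b' := y₃) hh hx₂.1 hy₂ hx₃'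
  have factor : ∀ a b d : ℝ, ξ * β * a ^ 2 * b * d / ((a ^ 2 + c₄ ^ 2) * (b + h))
      = ξ * β * (a ^ 2 / (a ^ 2 + c₄ ^ 2) * (b * d / (b + h))) := by
    intro a b d; rw [div_mul_div_comm]; ring
  rw [factor, factor, ← mul_sub, abs_mul, abs_of_nonneg (mul_nonneg hξ hβ)]
  calc _ ≤ ξ * β * (|x₁ ^ 2 / (x₁ ^ 2 + c₄ ^ 2) - y₁ ^ 2 / (y₁ ^ 2 + c₄ ^ 2)| * |x₂ * x₃ / (x₂ + h)|
          + |y₁ ^ 2 / (y₁ ^ 2 + c₄ ^ 2)| * |x₂ * x₃ / (x₂ + h) - y₂ * y₃ / (y₂ + h)|) :=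
      mul_le_mul_of_nonneg_left (abs_mul_sub_mul_le _ _ _ _) (mul_nonneg hξ hβ)
    _ ≤ ξ * β * (2 * M₁ / c₄ ^ 2 * |x₁ - y₁| * (M₂ * M₃ / h)
          + M₁ ^ 2 / c₄ ^ 2 * (M₃ / h * |x₂ - y₂| + M₂ / h * |x₃ - y₃|)) := by gcongr
    _ = _ := by field_simp; ring

theorem f_lipschitz_general
    (H B δ v β ξ γ c₀ c₁ c₂ c₃ c₄ h M₁ M₂ M₃ : ℝ)
    (hH : 0 ≤ H) (hB : 0 ≤ B) (hδ : 0 ≤ δ) (hv : 0 ≤ v) (hβ : 0 ≤ β)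
    (hξ : 0 ≤ ξ) (hγ : 0 ≤ γ)
    (hc₀ : 0 < c₀) (hc₁ : 0 < c₁) (hc₂ : 0 < c₂) (hc₃ : 0 < c₃) (hc₄ : 0 < c₄)
    (hh : 0 < h)
    (f₁ f₂ f₃ : ℝ → ℝ → ℝ → ℝ)
    (hf₁ : ∀ z₁ z₂ z₃, f₁ z₁ z₂ z₃ =
      H * c₀ * z₂ / (z₁ + c₀) - δ * z₁ * z₂ / (z₁ + c₂) - v * z₁ * z₃ / (z₁ + c₃))
    (hf₂ : ∀ z₁ z₂ z₃, f₂ z₁ z₂ z₃ =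
      (B * z₁ / (z₁ + c₁) - γ * z₂) * z₂ - β * z₂ * z₃ / (z₂ + h))
    (hf₃ : ∀ z₁ z₂ z₃, f₃ z₁ z₂ z₃ =
      ξ * β * z₁ ^ 2 * z₂ * z₃ / ((z₁ ^ 2 + c₄ ^ 2) * (z₂ + h)))
    (L₁ L₂ L₃ L : ℝ)
    (hL₁ : L₁ = H * M₂ / c₀ + δ * M₂ / c₂ + v * M₃ / c₃ + B * M₂ / c₁
      + 2 * ξ * β * M₁ * M₂ * M₃ / (h * c₄ ^ 2))
    (hL₂ : L₂ = H * (M₁ + c₀) / c₀ + δ * M₁ * (M₁ + c₂) / c₂ ^ 2 + B * M₁ / c₁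
      + 2 * γ * M₂ + β * M₃ / h + ξ * β * M₁ ^ 2 * M₃ / (h * c₄ ^ 2))
    (hL₃ : L₃ = v * M₁ * (M₁ + c₃) / c₃ ^ 2 + β * M₂ / h
      + ξ * β * M₁ ^ 2 * M₂ / (h * c₄ ^ 2))
    (hL : L = max (max L₁ L₂) L₃) :
    ∀ x₁ x₂ x₃ y₁ y₂ y₃ : ℝ,
      0 ≤ x₁ → x₁ ≤ M₁ → 0 ≤ y₁ → y₁ ≤ M₁ →
      0 ≤ x₂ → x₂ ≤ M₂ → 0 ≤ y₂ → y₂ ≤ M₂ →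
      0 ≤ x₃ → x₃ ≤ M₃ → 0 ≤ y₃ → y₃ ≤ M₃ →
      |f₁ x₁ x₂ x₃ - f₁ y₁ y₂ y₃| + |f₂ x₁ x₂ x₃ - f₂ y₁ y₂ y₃|
        + |f₃ x₁ x₂ x₃ - f₃ y₁ y₂ y₃|
      ≤ L * (|x₁ - y₁| + |x₂ - y₂| + |x₃ - y₃|) := by
  intro x₁ x₂ x₃ y₁ y₂ y₃ hx₁ hx₁' hy₁ hy₁' hx₂ hx₂' hy₂ hy₂' hx₃ hx₃' _ _
  have T₁ := first_component_abs_sub_le (y₂ := y₂) (y₃ := y₃) hH hδ hv hc₀ hc₂ hc₃ hx₁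
    ⟨hy₁, hy₁'⟩ ⟨hx₂, hx₂'⟩ ⟨hx₃, hx₃'⟩
  have T₂ := second_component_abs_sub_le (y₃ := y₃) hB hγ hβ hc₁ hh hx₁ ⟨hy₁, hy₁'⟩
    ⟨hx₂, hx₂'⟩ ⟨hy₂, hy₂'⟩ ⟨hx₃, hx₃'⟩
  have T₃ := third_component_abs_sub_le (y₃ := y₃) hξ hβ hc₄ hh ⟨hx₁, hx₁'⟩ ⟨hy₁, hy₁'⟩
    ⟨hx₂, hx₂'⟩ ⟨hy₂, hy₂'⟩ ⟨hx₃, hx₃'⟩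
  simp only [hf₁, hf₂, hf₃]
  calc _ ≤ L₁ * |x₁ - y₁| + L₂ * |x₂ - y₂| + L₃ * |x₃ - y₃| := by
        subst hL₁ hL₂ hL₃; linear_combination T₁ + T₂ + T₃
    _ ≤ L * (|x₁ - y₁| + |x₂ - y₂| + |x₃ - y₃|) :=
      hL ▸ add_mul_le_max_mul (abs_nonneg _) (abs_nonneg _) (abs_nonneg _)

/-- The nonlinear part `f` of the plankton–oxygen model is Lipschitz with constant
`L = max {L₁, L₂, L₃}` on the box `Ω` with respect to the ℓ¹ norm. -/
theorem f_lipschitz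
    (H B δ v β ξ γ c₀ c₁ c₂ c₃ c₄ h M₁ M₂ M₃ : ℝ)
    (hH : 0 ≤ H) (hB : 0 ≤ B) (hδ : 0 ≤ δ) (hv : 0 ≤ v) (hβ : 0 ≤ β)
    (hξ : 0 ≤ ξ) (hγ : 0 ≤ γ)
    (hc₀ : 0 < c₀) (hc₁ : 0 < c₁) (hc₂ : 0 < c₂) (hc₃ : 0 < c₃) (hc₄ : 0 < c₄)
    (hh : 0 < h) (hM₁ : 0 ≤ M₁) (hM₂ : 0 ≤ M₂) (hM₃ : 0 ≤ M₃)
    (f₁ f₂ f₃ : ℝ → ℝ → ℝ → ℝ)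
    (hf₁ : ∀ z₁ z₂ z₃, f₁ z₁ z₂ z₃ =
      H * c₀ * z₂ / (z₁ + c₀) - δ * z₁ * z₂ / (z₁ + c₂) - v * z₁ * z₃ / (z₁ + c₃))
    (hf₂ : ∀ z₁ z₂ z₃, f₂ z₁ z₂ z₃ =
      (B * z₁ / (z₁ + c₁) - γ * z₂) * z₂ - β * z₂ * z₃ / (z₂ + h))
    (hf₃ : ∀ z₁ z₂ z₃, f₃ z₁ z₂ z₃ =
      ξ * β * z₁ ^ 2 * z₂ * z₃ / ((z₁ ^ 2 + c₄ ^ 2) * (z₂ + h)))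
    (L₁ L₂ L₃ L : ℝ)
    (hL₁ : L₁ = H * M₂ / c₀ + δ * M₂ / c₂ + v * M₃ / c₃ + B * M₂ / c₁
      + 2 * ξ * β * M₁ * M₂ * M₃ / (h * c₄ ^ 2))
    (hL₂ : L₂ = H * (M₁ + c₀) / c₀ + δ * M₁ * (M₁ + c₂) / c₂ ^ 2 + B * M₁ / c₁
      + 2 * γ * M₂ + β * M₃ / h + ξ * β * M₁ ^ 2 * M₃ / (h * c₄ ^ 2))
    (hL₃ : L₃ = v * M₁ * (M₁ + c₃) / c₃ ^ 2 + β * M₂ / h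
      + ξ * β * M₁ ^ 2 * M₂ / (h * c₄ ^ 2))
    (hL : L = max (max L₁ L₂) L₃) :
    ∀ x₁ x₂ x₃ y₁ y₂ y₃ : ℝ,
      0 ≤ x₁ → x₁ ≤ M₁ → 0 ≤ y₁ → y₁ ≤ M₁ →
      0 ≤ x₂ → x₂ ≤ M₂ → 0 ≤ y₂ → y₂ ≤ M₂ →
      0 ≤ x₃ → x₃ ≤ M₃ → 0 ≤ y₃ → y₃ ≤ M₃ →
      |f₁ x₁ x₂ x₃ - f₁ y₁ y₂ y₃| + |f₂ x₁ x₂ x₃ - f₂ y₁ y₂ y₃|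
        + |f₃ x₁ x₂ x₃ - f₃ y₁ y₂ y₃|
      ≤ L * (|x₁ - y₁| + |x₂ - y₂| + |x₃ - y₃|) :=
  f_lipschitz_general H B δ v β ξ γ c₀ c₁ c₂ c₃ c₄ h M₁ M₂ M₃ hH hB hδ hv hβ hξ hγ hc₀ hc₁ hc₂ hc₃
    hc₄ hh f₁ f₂ f₃ hf₁ hf₂ hf₃ L₁ L₂ L₃ L hL₁ hL₂ hL₃ hL
end

section
/- Let T > 0, α > 0, and M ≥ 0, and let U : [0, T] → ℝ be a nonnegative continuous function satisfying U(t) ≤ M · ∫₀ᵗ (t−s)^(α−1) U(s) ds for all t ∈ [0, T]. Then U(t) = 0 for all t ∈ [0, T]. -/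
open MeasureTheory intervalIntegral Set

lemma volterra_ker_integrable (α t a b : ℝ) (hα : 0 < α) :
    IntervalIntegrable (fun s => (t - s) ^ (α - 1)) volume a b := by
  have h := (intervalIntegrable_rpow' (a := t - a) (b := t - b)
      (r := α - 1) (by linarith)).comp_sub_left t
  simpa using h

lemma volterra_ker_integral (α t a : ℝ) (hα : 0 < α) (hat : a ≤ t) :
    (∫ s in a..t, (t - s) ^ (α - 1)) = (t - a) ^ α / α := by
  rw [intervalIntegral.integral_comp_sub_left (fun x => x ^ (α - 1)) t, sub_self,
    integral_rpow (Or.inl (by linarith))]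
  rw [sub_add_cancel, Real.zero_rpow (ne_of_gt hα), sub_zero]

/-- A nonnegative continuous function dominated by a singular Volterra integral of
itself vanishes identically (uniqueness lemma). -/
theorem volterra_self_bound_zero
    (T α M : ℝ) (hT : 0 < T) (hα : 0 < α) (hM : 0 ≤ M)
    (U : ℝ → ℝ)
    (hU_cont : ContinuousOn U (Icc 0 T))
    (hU_nonneg : ∀ t ∈ Icc 0 T, 0 ≤ U t)
    (hineq : ∀ t ∈ Icc 0 T,
      U t ≤ M * ∫ s in (0:ℝ)..t, (t - s) ^ (α - 1) * U s) :
    ∀ t ∈ Icc 0 T, U t = 0 := by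
  rcases eq_or_lt_of_le hM with hM0 | hM0
  · intro t ht
    have h1 := hineq t ht
    rw [← hM0, zero_mul] at h1
    exact le_antisymm h1 (hU_nonneg t ht)
  -- choose step size h
  set h : ℝ := min T ((α / (2 * M)) ^ (α⁻¹)) with hh
  have hhpos : 0 < h := by
    apply lt_min hT
    apply Real.rpow_pos_of_pos
    positivity
  have hkey : M * h ^ α / α ≤ 1 / 2 := by
    have h1 : h ^ α ≤ α / (2 * M) := by
      calc h ^ α ≤ ((α / (2 * M)) ^ (α⁻¹)) ^ α :=
            Real.rpow_le_rpow hhpos.le (min_le_right _ _) hα.le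
        _ = α / (2 * M) := Real.rpow_inv_rpow (by positivity) (ne_of_gt hα)
    have h2 : M * (α / (2 * M)) = α / 2 := by
      field_simp
    have h3 : M * h ^ α ≤ α / 2 := by
      calc M * h ^ α ≤ M * (α / (2 * M)) := by
            exact mul_le_mul_of_nonneg_left h1 hM0.le
        _ = α / 2 := h2
    rw [div_le_div_iff₀ hα (by norm_num : (0:ℝ) < 2)]
    linarith
  -- main induction
  have main : ∀ n : ℕ, ∀ t ∈ Icc 0 (min (n * h) T), U t = 0 := by
    intro n
    induction n with
    | zero =>
      intro t ht
      simp only [Nat.cast_zero, zero_mul, min_eq_left hT.le, Icc_self, mem_singleton_iff] at ht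
      subst ht
      have h1 := hineq 0 ⟨le_refl _, hT.le⟩
      rw [intervalIntegral.integral_same, mul_zero] at h1
      exact le_antisymm h1 (hU_nonneg 0 ⟨le_refl _, hT.le⟩)
    | succ n ih =>
      set b : ℝ := min (n * h) T with hb
      set b' : ℝ := min ((n + 1 : ℕ) * h) T with hb'
      have hbnn : 0 ≤ b := le_min (by positivity) hT.le
      have hbb' : b ≤ b' := by
        apply le_min _ (min_le_right _ _)
        calc b ≤ (n : ℝ) * h := min_le_left _ _
          _ ≤ ((n : ℕ) + 1 : ℝ) * h := by nlinarith
          _ = ((n + 1 : ℕ) : ℝ) * h := by push_cast; ring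
      have hb'T : b' ≤ T := min_le_right _ _
      have hb'h : b' ≤ b + h := by
        rcases le_total ((n : ℝ) * h) T with H | H
        · rw [hb, min_eq_left H]
          calc b' ≤ ((n + 1 : ℕ) : ℝ) * h := min_le_left _ _
            _ = (n : ℝ) * h + h := by push_cast; ring
        · rw [hb, min_eq_right H]
          calc b' ≤ T := hb'T
            _ ≤ T + h := by linarith
      -- continuity of U on [0, b']
      have hcont' : ContinuousOn U (Icc 0 b') :=
        hU_cont.mono (Icc_subset_Icc_right hb'T)
      obtain ⟨t₁, ht₁, hmax⟩ := isCompact_Icc.exists_isMaxOn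
        (nonempty_Icc.mpr (hbnn.trans hbb')) hcont'
      set S : ℝ := U t₁ with hS
      have ht₁T : t₁ ∈ Icc 0 T := ⟨ht₁.1, ht₁.2.trans hb'T⟩
      have hSnn : 0 ≤ S := hU_nonneg t₁ ht₁T
      have hUleS : ∀ s ∈ Icc 0 b', U s ≤ S := fun s hs => hmax hs
      have hSzero : S = 0 := by
        rcases le_or_gt t₁ b with hcase | hcase
        · exact ih t₁ ⟨ht₁.1, hcase⟩
        · -- the integral inequality at t₁
          have hbt₁ : b ≤ t₁ := hcase.le
          have hI1 : IntervalIntegrable (fun s => (t₁ - s) ^ (α - 1) * U s) volume 0 b := by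
            apply (volterra_ker_integrable α t₁ 0 b hα).mul_continuousOn
            apply hU_cont.mono
            rw [uIcc_of_le hbnn]
            exact Icc_subset_Icc_right (le_trans hbb' hb'T)
          have hI2 : IntervalIntegrable (fun s => (t₁ - s) ^ (α - 1) * U s) volume b t₁ := by
            apply (volterra_ker_integrable α t₁ b t₁ hα).mul_continuousOn
            apply hU_cont.mono
            rw [uIcc_of_le hbt₁]
            exact Icc_subset_Icc hbnn ht₁T.2
          have hsplit : (∫ s in (0:ℝ)..t₁, (t₁ - s) ^ (α - 1) * U s)
              = (∫ s in (0:ℝ)..b, (t₁ - s) ^ (α - 1) * U s)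
              + ∫ s in b..t₁, (t₁ - s) ^ (α - 1) * U s :=
            (intervalIntegral.integral_add_adjacent_intervals hI1 hI2).symm
          have hfirst : (∫ s in (0:ℝ)..b, (t₁ - s) ^ (α - 1) * U s) = 0 := by
            have heq : EqOn (fun s => (t₁ - s) ^ (α - 1) * U s) (fun _ => (0:ℝ)) (Set.uIcc (0:ℝ) b) := by
              intro s hs
              rw [uIcc_of_le hbnn] at hs
              simp [ih s hs]
            rw [intervalIntegral.integral_congr heq]
            simp
          have hsecond : (∫ s in b..t₁, (t₁ - s) ^ (α - 1) * U s)
              ≤ ∫ s in b..t₁, (t₁ - s) ^ (α - 1) * S := by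
            apply intervalIntegral.integral_mono_on hbt₁ hI2
              ((volterra_ker_integrable α t₁ b t₁ hα).mul_const S)
            intro s hs
            apply mul_le_mul_of_nonneg_left _ (Real.rpow_nonneg (by linarith [hs.2]) _)
            exact hUleS s ⟨hbnn.trans hs.1, hs.2.trans ht₁.2⟩
          have hval : (∫ s in b..t₁, (t₁ - s) ^ (α - 1) * S)
              = (t₁ - b) ^ α / α * S := by
            rw [intervalIntegral.integral_mul_const, volterra_ker_integral α t₁ b hα hbt₁]
          have hpow : (t₁ - b) ^ α ≤ h ^ α :=
            Real.rpow_le_rpow (by linarith) (by linarith [ht₁.2, hb'h]) hα.le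
          have hchain : S ≤ 1 / 2 * S := by
            calc S ≤ M * ∫ s in (0:ℝ)..t₁, (t₁ - s) ^ (α - 1) * U s := hineq t₁ ht₁T
              _ = M * ∫ s in b..t₁, (t₁ - s) ^ (α - 1) * U s := by
                  rw [hsplit, hfirst, zero_add]
              _ ≤ M * ((t₁ - b) ^ α / α * S) := by
                  apply mul_le_mul_of_nonneg_left _ hM0.le
                  rw [← hval]; exact hsecond
              _ = M * (t₁ - b) ^ α / α * S := by ring
              _ ≤ M * h ^ α / α * S := by gcongr
              _ ≤ 1 / 2 * S := mul_le_mul_of_nonneg_right hkey hSnn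
          linarith
      intro t ht
      exact le_antisymm ((hUleS t ht).trans_eq hSzero)
        (hU_nonneg t ⟨ht.1, ht.2.trans hb'T⟩)
  intro t ht
  obtain ⟨n, hn⟩ := exists_nat_ge (T / h)
  have hnh : T ≤ n * h := by
    rw [div_le_iff₀ hhpos] at hn
    linarith
  exact main n t ⟨ht.1, by rw [min_eq_right hnh]; exact ht.2⟩
end

section
/- Let T > 0, α > 0, M ≥ 0, and C ≥ 0, and let V : [0, T] → ℝ be a nonnegative integrable function satisfying V(t) ≤ C + M · ∫₀ᵗ (t−s)^(α−1) V(s) ds for all t ∈ [0, T]. Then for all t ∈ [0, T], V(t) ≤ C · E_α(M · Γ(α) · t^α), where E_α(z) = ∑_{k=0}^{∞} z^k / Γ(kα + 1) is the one-parameter Mittag-Leffler function and Γ is the Gamma function. -/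
open MeasureTheory intervalIntegral Set Filter
open scoped ENNReal

lemma vml_gamma_mono {x y : ℝ} (hx : 2 ≤ x) (hxy : x ≤ y) :
    Real.Gamma x ≤ Real.Gamma y :=
  Real.Gamma_strictMonoOn_Ici.monotoneOn (mem_Ici.2 hx) (mem_Ici.2 (hx.trans hxy)) hxy

lemma vml_tendsto_pow_div_Gamma {α : ℝ} (hα : 0 < α) (c : ℝ) (hc : 0 ≤ c) {x : ℝ} (hx : 0 ≤ x) :
    Tendsto (fun n : ℕ => x ^ n / Real.Gamma (n * α + c)) atTop (nhds 0) := by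
  set p : ℕ := ⌈1/α⌉₊ with hp
  set X : ℝ := max 1 x with hX
  have hX1 : (1:ℝ) ≤ X := le_max_left _ _
  set Z : ℝ := X ^ p with hZ
  have hZ1 : (1:ℝ) ≤ Z := one_le_pow₀ hX1
  have hw : Tendsto (fun j : ℕ => Z^2 * (Z ^ j / j.factorial)) atTop (nhds 0) := by
    simpa using (FloorSemiring.tendsto_pow_div_factorial_atTop Z).const_mul (Z^2)
  have hs : Tendsto (fun n : ℕ => (n:ℝ) * α + c) atTop atTop :=
    tendsto_atTop_add_const_right _ c (tendsto_natCast_atTop_atTop.atTop_mul_const hα)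
  have hm : Tendsto (fun n : ℕ => ⌊(n:ℝ) * α + c⌋₊ - 1) atTop atTop :=
    (tendsto_sub_atTop_nat 1).comp (tendsto_nat_floor_atTop.comp hs)
  refine squeeze_zero' ?_ ?_ (hw.comp hm)
  · filter_upwards [hs.eventually_ge_atTop 1] with n hn
    have : 0 < Real.Gamma ((n:ℝ)*α + c) := Real.Gamma_pos_of_pos (by linarith)
    positivity
  · filter_upwards [hs.eventually_ge_atTop 3] with n hn
    set s : ℝ := (n:ℝ) * α + c with hsdef
    set m : ℕ := ⌊s⌋₊ with hmdef
    have hs0 : (0:ℝ) ≤ s := by linarith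
    have hm3 : 3 ≤ m := Nat.le_floor (by exact_mod_cast hn)
    have hms : (m:ℝ) ≤ s := Nat.floor_le hs0
    have hsm1 : s < m + 1 := Nat.lt_floor_add_one s
    -- Gamma lower bound
    have hG : (((m-1).factorial : ℝ)) ≤ Real.Gamma s := by
      have h1 : Real.Gamma ((m:ℝ)) ≤ Real.Gamma s := vml_gamma_mono (by exact_mod_cast hm3.trans' (by norm_num)) hms
      have h2 : Real.Gamma ((m:ℝ)) = (m-1).factorial := by
        have : ((m:ℝ)) = ((m-1 : ℕ):ℝ) + 1 := by
          have : 1 ≤ m := by omega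
          push_cast [Nat.cast_sub this]
          ring
        rw [this, Real.Gamma_nat_eq_factorial]
      linarith [h2 ▸ h1]
    have hGpos : 0 < Real.Gamma s := Real.Gamma_pos_of_pos (by linarith)
    -- numerator bound
    have hnum : x ^ n ≤ Z ^ (m + 1) := by
      have hxX : x ^ n ≤ X ^ n := pow_le_pow_left₀ hx (le_max_right _ _) n
      have hnle : n ≤ (m+1) * p := by
        have hαp : 1 ≤ α * p := by
          have : (1/α) ≤ (p:ℝ) := Nat.le_ceil _
          calc (1:ℝ) = α * (1/α) := by field_simp
          _ ≤ α * p := by nlinarith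
        have : (n:ℝ) ≤ (n:ℝ) * (α * p) := le_mul_of_one_le_right n.cast_nonneg hαp
        have h2 : (n:ℝ) * α ≤ (m:ℝ) + 1 := by nlinarith
        have : (n:ℝ) ≤ ((m:ℝ)+1) * p := by nlinarith [Nat.cast_nonneg (α := ℝ) p, hα.le]
        have hfin : (n:ℝ) ≤ (((m+1) * p : ℕ) : ℝ) := by push_cast; linarith
        exact_mod_cast hfin
      calc x ^ n ≤ X ^ n := hxX
        _ ≤ X ^ ((m+1)*p) := pow_le_pow_right₀ hX1 hnle
        _ = Z ^ (m+1) := by rw [hZ, ← pow_mul, Nat.mul_comm]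
    have key : x ^ n / Real.Gamma s ≤ Z^2 * (Z ^ (m - 1) / (m-1).factorial) := by
      have hfact : (0:ℝ) < (m-1).factorial := by exact_mod_cast (m-1).factorial_pos
      have hZm : Z ^ (m+1) = Z^2 * Z^(m-1) := by
        rw [← pow_add]; congr 1; omega
      rw [div_le_iff₀ hGpos]
      calc x ^ n ≤ Z ^ (m+1) := hnum
        _ = Z^2 * Z^(m-1) := hZm
        _ = (Z^2 * (Z ^ (m - 1) / (m-1).factorial)) * (m-1).factorial := by
            field_simp
        _ ≤ (Z^2 * (Z ^ (m - 1) / (m-1).factorial)) * Real.Gamma s := by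
            have h0 : 0 ≤ Z^2 * (Z ^ (m - 1) / (m-1).factorial) := by positivity
            exact mul_le_mul_of_nonneg_left hG h0
    exact key

lemma vml_summable {α : ℝ} (hα : 0 < α) {x : ℝ} (hx : 0 ≤ x) :
    Summable (fun k : ℕ => x ^ k / Real.Gamma (k * α + 1)) := by
  have h2 := vml_tendsto_pow_div_Gamma hα 1 zero_le_one (x := 2*x) (by linarith)
  obtain ⟨D, hD⟩ : ∃ D, ∀ k : ℕ, (2*x) ^ k / Real.Gamma (k * α + 1) ≤ D := by
    obtain ⟨D, hD⟩ := h2.bddAbove_range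
    exact ⟨D, fun k => hD (Set.mem_range_self k)⟩
  refine Summable.of_nonneg_of_le (fun k => ?_) (fun k => ?_)
    ((summable_geometric_two).mul_left D)
  · have : 0 < Real.Gamma (k * α + 1) := Real.Gamma_pos_of_pos (by positivity)
    positivity
  · have hG : 0 < Real.Gamma (k * α + 1) := Real.Gamma_pos_of_pos (by positivity)
    have : x ^ k / Real.Gamma (k * α + 1)
        = ((2*x) ^ k / Real.Gamma (k * α + 1)) * (1/2)^k := by
      rw [mul_pow]; field_simp; rw [mul_assoc, ← mul_pow]; norm_num
    rw [this]
    have h1 : (0:ℝ) ≤ (1/2:ℝ)^k := by positivity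
    calc ((2*x) ^ k / Real.Gamma (k * α + 1)) * (1/2)^k ≤ D * (1/2)^k :=
          mul_le_mul_of_nonneg_right (hD k) h1
      _ = D * (1/2)^k := rfl

lemma vml_real_beta {p q : ℝ} (hp : 0 < p) (hq : 0 < q) :
    ∫ x in (0:ℝ)..1, x ^ (p-1) * (1-x) ^ (q-1)
      = Real.Gamma p * Real.Gamma q / Real.Gamma (p+q) := by
  have hc := Complex.Gamma_mul_Gamma_eq_betaIntegral
    (show 0 < (p:ℂ).re by simpa using hp) (show 0 < (q:ℂ).re by simpa using hq)
  have hbeta : Complex.betaIntegral (p:ℂ) (q:ℂ)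
      = ((∫ x in (0:ℝ)..1, x ^ (p-1) * (1-x) ^ (q-1) : ℝ) : ℂ) := by
    rw [Complex.betaIntegral, ← intervalIntegral.integral_ofReal]
    refine intervalIntegral.integral_congr (fun x hx => ?_)
    rw [uIcc_of_le (by norm_num : (0:ℝ) ≤ 1)] at hx
    obtain ⟨hx0, hx1⟩ := hx
    push_cast
    rw [Complex.ofReal_cpow hx0, Complex.ofReal_cpow (by linarith)]
    push_cast
    ring
  rw [hbeta] at hc
  have hGpq : Real.Gamma (p+q) ≠ 0 := (Real.Gamma_pos_of_pos (by linarith)).ne'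
  have hc' : Real.Gamma p * Real.Gamma q
      = Real.Gamma (p+q) * ∫ x in (0:ℝ)..1, x ^ (p-1) * (1-x) ^ (q-1) := by
    have := hc
    rw [Complex.Gamma_ofReal, Complex.Gamma_ofReal] at this
    rw [show ((p:ℂ) + q) = ((p+q : ℝ) : ℂ) by push_cast; ring, Complex.Gamma_ofReal] at this
    exact_mod_cast this
  field_simp [hc']
  linarith [hc']

lemma vml_beta_integrable {p q u t : ℝ} (hp : 0 < p) (hq : 0 < q) (hut : u < t) :
    IntervalIntegrable (fun s => (t-s)^(p-1) * (s-u)^(q-1)) volume u t := by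
  set m := (u+t)/2 with hm
  have hum : u < m := by rw [hm]; linarith
  have hmt : m < t := by rw [hm]; linarith
  have left : IntervalIntegrable (fun s => (t-s)^(p-1) * (s-u)^(q-1)) volume u m := by
    have hint : IntervalIntegrable (fun s => (s-u)^(q-1)) volume u m := by
      have := (intervalIntegrable_rpow' (show (-1:ℝ) < q-1 by linarith)
        (a := 0) (b := m - u)).comp_sub_right u
      simpa using this
    have hcont : ContinuousOn (fun s => (t-s)^(p-1)) (uIcc u m) := by
      rw [uIcc_of_le hum.le]
      refine ContinuousOn.rpow_const (by fun_prop) (fun s hs => Or.inl ?_)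
      have : s ≤ m := hs.2
      intro h
      linarith [sub_eq_zero.mp h]
    simpa [mul_comm] using hint.mul_continuousOn hcont
  have right : IntervalIntegrable (fun s => (t-s)^(p-1) * (s-u)^(q-1)) volume m t := by
    have hint : IntervalIntegrable (fun s => (t-s)^(p-1)) volume m t := by
      have := (intervalIntegrable_rpow' (show (-1:ℝ) < p-1 by linarith)
        (a := 0) (b := t - m)).comp_sub_left t
      simpa using this.symm
    have hcont : ContinuousOn (fun s => (s-u)^(q-1)) (uIcc m t) := by
      rw [uIcc_of_le hmt.le]
      refine ContinuousOn.rpow_const (by fun_prop) (fun s hs => Or.inl ?_)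
      have : m ≤ s := hs.1
      intro h
      linarith [sub_eq_zero.mp h]
    exact hint.mul_continuousOn hcont
  exact left.trans right

lemma vml_beta_eval {p q u t : ℝ} (hp : 0 < p) (hq : 0 < q) (hut : u < t) :
    ∫ s in u..t, (t-s)^(p-1) * (s-u)^(q-1)
      = Real.Gamma p * Real.Gamma q / Real.Gamma (p+q) * (t-u)^(p+q-1) := by
  set d := t - u with hd
  have hd0 : 0 < d := by rw [hd]; linarith
  have hsub : ∫ s in u..t, (t-s)^(p-1) * (s-u)^(q-1)
      = d • ∫ x in (0:ℝ)..1, (t - (d*x+u))^(p-1) * ((d*x+u)-u)^(q-1) := by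
    rw [intervalIntegral.integral_comp_mul_add
      (fun s => (t-s)^(p-1) * (s-u)^(q-1)) hd0.ne' u]
    rw [smul_smul, mul_inv_cancel₀ hd0.ne', one_smul]
    norm_num [hd]
  rw [hsub]
  have hcongr : ∫ x in (0:ℝ)..1, (t - (d*x+u))^(p-1) * ((d*x+u)-u)^(q-1)
      = ∫ x in (0:ℝ)..1, (d^(p-1) * d^(q-1)) * ((1-x)^(p-1) * x^(q-1)) := by
    refine intervalIntegral.integral_congr (fun x hx => ?_)
    rw [uIcc_of_le (by norm_num : (0:ℝ) ≤ 1)] at hx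
    obtain ⟨hx0, hx1⟩ := hx
    have h1 : t - (d*x+u) = d * (1-x) := by rw [hd]; ring
    have h2 : (d*x+u)-u = d * x := by ring
    rw [h1, h2, Real.mul_rpow hd0.le (by linarith), Real.mul_rpow hd0.le hx0]
    ring
  rw [hcongr, intervalIntegral.integral_const_mul]
  have hbeta : ∫ x in (0:ℝ)..1, (1-x)^(p-1) * x^(q-1)
      = Real.Gamma p * Real.Gamma q / Real.Gamma (p+q) := by
    have h := vml_real_beta hq hp
    calc ∫ x in (0:ℝ)..1, (1-x)^(p-1) * x^(q-1)
        = ∫ x in (0:ℝ)..1, x^(q-1) * (1-x)^(p-1) :=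
          intervalIntegral.integral_congr (fun x _ => mul_comm _ _)
      _ = Real.Gamma q * Real.Gamma p / Real.Gamma (q+p) := h
      _ = Real.Gamma p * Real.Gamma q / Real.Gamma (p+q) := by rw [add_comm q p, mul_comm]
  rw [hbeta]
  have hdpow : d * (d^(p-1) * d^(q-1)) = d^(p+q-1) := by
    have h1 : d^(p+q-1) = d^((1:ℝ)) * d^(p-1) * d^(q-1) := by
      rw [mul_assoc, ← Real.rpow_add hd0, ← Real.rpow_add hd0]
      congr 1
      ring
    rw [h1, Real.rpow_one]
    ring
  rw [smul_eq_mul]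
  calc d * (d ^ (p - 1) * d ^ (q - 1) * (Real.Gamma p * Real.Gamma q / Real.Gamma (p + q)))
      = (d * (d^(p-1) * d^(q-1))) * (Real.Gamma p * Real.Gamma q / Real.Gamma (p+q)) := by ring
    _ = Real.Gamma p * Real.Gamma q / Real.Gamma (p+q) * d^(p+q-1) := by rw [hdpow]; ring

noncomputable def vmlJ (W : ℝ → ℝ) (β t : ℝ) : ℝ≥0∞ :=
  ∫⁻ s in Ioc (0:ℝ) t, ENNReal.ofReal ((t - s) ^ (β - 1)) * ENNReal.ofReal (W s)

noncomputable def vmlG (W : ℝ → ℝ) (α s u : ℝ) : ℝ≥0∞ :=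
  if u ∈ Ioc (0:ℝ) s then ENNReal.ofReal ((s - u) ^ (α - 1)) * ENNReal.ofReal (W u) else 0

lemma vmlG_measurable {W : ℝ → ℝ} (hW : Measurable W) (α : ℝ) :
    Measurable (Function.uncurry (vmlG W α)) := by
  have hset : MeasurableSet {p : ℝ × ℝ | p.2 ∈ Ioc (0:ℝ) p.1} :=
    (measurableSet_lt measurable_const measurable_snd).inter
      (measurableSet_le measurable_snd measurable_fst)
  have hker : Measurable fun p : ℝ × ℝ => (p.1 - p.2) ^ (α - 1) := by fun_prop
  exact Measurable.ite hset
    ((hker.ennreal_ofReal).mul ((hW.comp measurable_snd).ennreal_ofReal)) measurable_const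

lemma vmlG_measurable_snd {W : ℝ → ℝ} (hW : Measurable W) (α s : ℝ) :
    Measurable (vmlG W α s) :=
  (vmlG_measurable hW α).comp (measurable_const.prodMk measurable_id)

lemma vmlJ_eq_lintegral_G (W : ℝ → ℝ) (α s : ℝ) :
    vmlJ W α s = ∫⁻ u, vmlG W α s u ∂volume := by
  rw [vmlJ, ← lintegral_indicator measurableSet_Ioc]
  exact lintegral_congr fun u => by rw [Set.indicator_apply, vmlG]

lemma vmlJ_measurable {W : ℝ → ℝ} (hW : Measurable W) (α : ℝ) :
    Measurable (vmlJ W α) := by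
  have : vmlJ W α = fun s => ∫⁻ u, vmlG W α s u ∂volume :=
    funext (vmlJ_eq_lintegral_G W α)
  rw [this]
  exact Measurable.lintegral_prod_right (vmlG_measurable hW α)

lemma vmlJ_restrict (W : ℝ → ℝ) (α : ℝ) {t s : ℝ} (hs : s ∈ Ioc (0:ℝ) t) :
    vmlJ W α s = ∫⁻ u in Ioc (0:ℝ) t, vmlG W α s u ∂volume := by
  have h1 : ∫⁻ u in Ioc (0:ℝ) t, vmlG W α s u ∂volume
      = ∫⁻ u in Ioc (0:ℝ) t, (Ioc (0:ℝ) s).indicator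
          (fun u => ENNReal.ofReal ((s - u) ^ (α - 1)) * ENNReal.ofReal (W u)) u ∂volume :=
    lintegral_congr fun u => by rw [Set.indicator_apply, vmlG]
  rw [h1, lintegral_indicator measurableSet_Ioc, Measure.restrict_restrict measurableSet_Ioc,
    inter_eq_left.2 (Ioc_subset_Ioc_right hs.2), vmlJ]

lemma vml_kernel_lintegral {β : ℝ} (hβ : 0 < β) {t : ℝ} (ht : 0 ≤ t) :
    ∫⁻ s in Ioc (0:ℝ) t, ENNReal.ofReal ((t - s) ^ (β - 1)) = ENNReal.ofReal (t ^ β / β) := by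
  have hint : IntegrableOn (fun s => (t - s) ^ (β - 1)) (Ioc (0:ℝ) t) := by
    have h := (intervalIntegrable_rpow' (show (-1:ℝ) < β - 1 by linarith)
      (a := 0) (b := t)).comp_sub_left t
    have h2 : IntervalIntegrable (fun s => (t - s) ^ (β - 1)) volume 0 t := by
      simpa using h.symm
    exact (intervalIntegrable_iff_integrableOn_Ioc_of_le ht).1 h2
  rw [← ofReal_integral_eq_lintegral_ofReal hint
    ((ae_restrict_iff' measurableSet_Ioc).2 (ae_of_all _ fun s hs =>
      Real.rpow_nonneg (by linarith [hs.2]) _))]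
  congr 1
  rw [← intervalIntegral.integral_of_le ht,
    intervalIntegral.integral_comp_sub_left (fun s => s ^ (β - 1)) t]
  simp only [sub_zero, sub_self]
  rw [integral_rpow (Or.inl (by linarith : (-1:ℝ) < β - 1))]
  have hb : β - 1 + 1 = β := by ring
  rw [hb, Real.zero_rpow (by linarith : β ≠ 0)]
  ring

lemma vmlF3 {W : ℝ → ℝ} (hW : Measurable W) {α β t : ℝ}
    (hα : 0 < α) (hβ : 0 < β) (ht : 0 ≤ t) :
    ∫⁻ s in Ioc (0:ℝ) t, ENNReal.ofReal ((t - s) ^ (β - 1)) * vmlJ W α s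
      ≤ ENNReal.ofReal (Real.Gamma β * Real.Gamma α / Real.Gamma (β + α))
        * vmlJ W (β + α) t := by
  set Bc : ℝ := Real.Gamma β * Real.Gamma α / Real.Gamma (β + α) with hBcdef
  have hΓβ := Real.Gamma_pos_of_pos hβ
  have hΓα := Real.Gamma_pos_of_pos hα
  have hΓβα := Real.Gamma_pos_of_pos (show 0 < β + α by linarith)
  have hBc0 : 0 ≤ Bc := by positivity
  have step1 : ∫⁻ s in Ioc (0:ℝ) t, ENNReal.ofReal ((t - s) ^ (β - 1)) * vmlJ W α s
      = ∫⁻ s in Ioc (0:ℝ) t, ∫⁻ u in Ioc (0:ℝ) t,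
          ENNReal.ofReal ((t - s) ^ (β - 1)) * vmlG W α s u ∂volume ∂volume := by
    refine setLIntegral_congr_fun_ae measurableSet_Ioc (ae_of_all _ fun s hs => ?_)
    rw [vmlJ_restrict W α hs, lintegral_const_mul _ (vmlG_measurable_snd hW α s)]
  have hswap : ∫⁻ s in Ioc (0:ℝ) t, ∫⁻ u in Ioc (0:ℝ) t,
        ENNReal.ofReal ((t - s) ^ (β - 1)) * vmlG W α s u ∂volume ∂volume
      = ∫⁻ u in Ioc (0:ℝ) t, ∫⁻ s in Ioc (0:ℝ) t,
          ENNReal.ofReal ((t - s) ^ (β - 1)) * vmlG W α s u ∂volume ∂volume := by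
    refine lintegral_lintegral_swap ?_
    have h1 : Measurable fun p : ℝ × ℝ => (t - p.1) ^ (β - 1) := by fun_prop
    exact ((h1.ennreal_ofReal).mul (vmlG_measurable hW α)).aemeasurable
  have inner : ∀ u ∈ Ioo (0:ℝ) t,
      (∫⁻ s in Ioc (0:ℝ) t, ENNReal.ofReal ((t - s) ^ (β - 1)) * vmlG W α s u ∂volume)
        = ENNReal.ofReal Bc
            * (ENNReal.ofReal ((t - u) ^ (β + α - 1)) * ENNReal.ofReal (W u)) := by
    intro u hu
    obtain ⟨hu0, hut⟩ := hu
    have e1 : ∀ s ∈ Ioc (0:ℝ) t, ENNReal.ofReal ((t - s) ^ (β - 1)) * vmlG W α s u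
        = (Ici u).indicator (fun s => ENNReal.ofReal ((t - s) ^ (β - 1) * (s - u) ^ (α - 1))
            * ENNReal.ofReal (W u)) s := by
      intro s hs
      rw [vmlG, Set.indicator_apply]
      by_cases h : u ∈ Ioc (0:ℝ) s
      · rw [if_pos h, if_pos (show s ∈ Ici u from h.2)]
        rw [ENNReal.ofReal_mul (Real.rpow_nonneg (by linarith [hs.2]) _), mul_assoc]
      · rw [if_neg h, if_neg (show s ∉ Ici u from fun hc => h ⟨hu0, hc⟩), mul_zero]
    have hIcc : Ici u ∩ Ioc (0:ℝ) t = Icc u t := by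
      ext s
      simp only [mem_inter_iff, mem_Ici, mem_Ioc, mem_Icc]
      exact ⟨fun ⟨h1, _, h3⟩ => ⟨h1, h3⟩, fun ⟨h1, h2⟩ => ⟨h1, lt_of_lt_of_le hu0 h1, h2⟩⟩
    have hint : IntegrableOn (fun s => (t - s) ^ (β - 1) * (s - u) ^ (α - 1)) (Ioc u t) :=
      (intervalIntegrable_iff_integrableOn_Ioc_of_le hut.le).1
        (vml_beta_integrable hβ hα hut)
    have hnn : 0 ≤ᵐ[volume.restrict (Ioc u t)]
        fun s => (t - s) ^ (β - 1) * (s - u) ^ (α - 1) :=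
      (ae_restrict_iff' measurableSet_Ioc).2 (ae_of_all _ fun s hs =>
        mul_nonneg (Real.rpow_nonneg (by linarith [hs.2]) _)
          (Real.rpow_nonneg (by linarith [hs.1]) _))
    calc ∫⁻ s in Ioc (0:ℝ) t, ENNReal.ofReal ((t - s) ^ (β - 1)) * vmlG W α s u ∂volume
        = ∫⁻ s in Ioc (0:ℝ) t, (Ici u).indicator
            (fun s => ENNReal.ofReal ((t - s) ^ (β - 1) * (s - u) ^ (α - 1))
              * ENNReal.ofReal (W u)) s ∂volume :=
          setLIntegral_congr_fun_ae measurableSet_Ioc (ae_of_all _ e1)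
      _ = ∫⁻ s in Icc u t, ENNReal.ofReal ((t - s) ^ (β - 1) * (s - u) ^ (α - 1))
            * ENNReal.ofReal (W u) ∂volume := by
          rw [lintegral_indicator measurableSet_Ici,
            Measure.restrict_restrict measurableSet_Ici, hIcc]
      _ = ∫⁻ s in Ioc u t, ENNReal.ofReal ((t - s) ^ (β - 1) * (s - u) ^ (α - 1))
            * ENNReal.ofReal (W u) ∂volume := setLIntegral_congr Ioc_ae_eq_Icc.symm
      _ = (∫⁻ s in Ioc u t, ENNReal.ofReal ((t - s) ^ (β - 1) * (s - u) ^ (α - 1)) ∂volume)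
            * ENNReal.ofReal (W u) := by
          refine lintegral_mul_const _ ?_
          have : Measurable fun s => (t - s) ^ (β - 1) * (s - u) ^ (α - 1) := by fun_prop
          exact this.ennreal_ofReal
      _ = ENNReal.ofReal (∫ s in Ioc u t, (t - s) ^ (β - 1) * (s - u) ^ (α - 1))
            * ENNReal.ofReal (W u) := by
          rw [ofReal_integral_eq_lintegral_ofReal hint hnn]
      _ = ENNReal.ofReal (Bc * (t - u) ^ (β + α - 1)) * ENNReal.ofReal (W u) := by
          rw [← intervalIntegral.integral_of_le hut.le, vml_beta_eval hβ hα hut]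
      _ = ENNReal.ofReal Bc
            * (ENNReal.ofReal ((t - u) ^ (β + α - 1)) * ENNReal.ofReal (W u)) := by
          rw [ENNReal.ofReal_mul hBc0, mul_assoc]
  calc ∫⁻ s in Ioc (0:ℝ) t, ENNReal.ofReal ((t - s) ^ (β - 1)) * vmlJ W α s
      = ∫⁻ u in Ioc (0:ℝ) t, ∫⁻ s in Ioc (0:ℝ) t,
          ENNReal.ofReal ((t - s) ^ (β - 1)) * vmlG W α s u ∂volume ∂volume := by
        rw [step1, hswap]
    _ = ∫⁻ u in Ioc (0:ℝ) t, ENNReal.ofReal Bc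
          * (ENNReal.ofReal ((t - u) ^ (β + α - 1)) * ENNReal.ofReal (W u)) ∂volume := by
        refine lintegral_congr_ae ?_
        have haeIoo : ∀ᵐ u ∂(volume.restrict (Ioc (0:ℝ) t)), u ∈ Ioo (0:ℝ) t := by
          rw [Measure.restrict_congr_set Ioo_ae_eq_Ioc.symm]
          exact ae_restrict_mem measurableSet_Ioo
        filter_upwards [haeIoo] with u hu
        exact inner u hu
    _ = ENNReal.ofReal Bc * vmlJ W (β + α) t := by
        rw [vmlJ]
        refine lintegral_const_mul _ ?_
        have : Measurable fun u => (t - u) ^ (β + α - 1) := by fun_prop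
        exact (this.ennreal_ofReal).mul (hW.ennreal_ofReal)
    _ ≤ ENNReal.ofReal Bc * vmlJ W (β + α) t := le_rfl

set_option maxHeartbeats 1000000 in
/-- Grönwall-type Mittag-Leffler bound for a nonnegative integrable function
dominated by a constant plus a singular Volterra integral of itself. -/
theorem volterra_mittag_leffler_bound
    (T α M C : ℝ) (hT : 0 < T) (hα : 0 < α) (hM : 0 ≤ M) (hC : 0 ≤ C)
    (V : ℝ → ℝ)
    (hV_nonneg : ∀ t ∈ Icc 0 T, 0 ≤ V t)
    (hV_int : IntegrableOn V (Icc 0 T))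
    (hineq : ∀ t ∈ Icc 0 T,
      V t ≤ C + M * ∫ s in (0:ℝ)..t, (t - s) ^ (α - 1) * V s) :
    ∀ t ∈ Icc 0 T,
      V t ≤ C * ∑' k : ℕ,
        (M * Real.Gamma α * t ^ α) ^ k / Real.Gamma (k * α + 1) := by
  classical
  have hΓα : 0 < Real.Gamma α := Real.Gamma_pos_of_pos hα
  have hae := hV_int.1.aemeasurable
  set W : ℝ → ℝ := fun x => max (hae.mk V x) 0 with hWdef
  have hWmeas : Measurable W := hae.measurable_mk.max measurable_const
  have hWnonneg : ∀ x, 0 ≤ W x := fun x => le_max_right _ _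
  have hVW : V =ᵐ[volume.restrict (Icc (0:ℝ) T)] W := by
    filter_upwards [hae.ae_eq_mk, ae_restrict_mem measurableSet_Icc] with x hx hmem
    rw [hWdef]
    simp only [← hx]
    exact (max_eq_left (hV_nonneg x hmem)).symm
  have hVWsub : ∀ t, 0 ≤ t → t ≤ T → V =ᵐ[volume.restrict (Ioc (0:ℝ) t)] W := by
    intro t _ htT
    exact ae_restrict_of_ae_restrict_of_subset
      (show Ioc (0:ℝ) t ⊆ Icc 0 T from fun x hx => ⟨hx.1.le, hx.2.trans htT⟩) hVW
  have hWint : IntegrableOn W (Icc (0:ℝ) T) := hV_int.congr hVW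
  -- relating the hypothesis integral with vmlJ
  have hRtoJ : ∀ t ∈ Icc (0:ℝ) T,
      (∫ s in (0:ℝ)..t, (t - s) ^ (α - 1) * V s) = (vmlJ W α t).toReal := by
    intro t ht
    rw [intervalIntegral.integral_of_le ht.1]
    have h1 : ∫ s in Ioc (0:ℝ) t, (t - s) ^ (α - 1) * V s
        = ∫ s in Ioc (0:ℝ) t, (t - s) ^ (α - 1) * W s := by
      refine integral_congr_ae ?_
      filter_upwards [hVWsub t ht.1 ht.2] with s hs
      rw [hs]
    rw [h1, MeasureTheory.integral_eq_lintegral_of_nonneg_ae]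
    · rw [vmlJ]
      congr 1
      refine setLIntegral_congr_fun_ae measurableSet_Ioc (ae_of_all _ fun s hs => ?_)
      rw [ENNReal.ofReal_mul (Real.rpow_nonneg (by linarith [hs.2]) _)]
    · refine (ae_restrict_iff' measurableSet_Ioc).2 (ae_of_all _ fun s hs => ?_)
      exact mul_nonneg (Real.rpow_nonneg (by linarith [hs.2]) _) (hWnonneg s)
    · exact ((by fun_prop : Measurable fun s => (t - s) ^ (α - 1) * W s)).aestronglyMeasurable
  -- the basic pointwise inequality, in ℝ≥0∞
  have hF1 : ∀ s ∈ Icc (0:ℝ) T,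
      ENNReal.ofReal (V s) ≤ ENNReal.ofReal C + ENNReal.ofReal M * vmlJ W α s := by
    intro s hs
    have h1 := hineq s hs
    rw [hRtoJ s hs] at h1
    calc ENNReal.ofReal (V s) ≤ ENNReal.ofReal (C + M * (vmlJ W α s).toReal) :=
          ENNReal.ofReal_le_ofReal h1
      _ ≤ ENNReal.ofReal C + ENNReal.ofReal (M * (vmlJ W α s).toReal) := ENNReal.ofReal_add_le
      _ = ENNReal.ofReal C + ENNReal.ofReal M * ENNReal.ofReal ((vmlJ W α s).toReal) := by
          rw [ENNReal.ofReal_mul hM]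
      _ ≤ ENNReal.ofReal C + ENNReal.ofReal M * vmlJ W α s := by
          gcongr
          exact ENNReal.ofReal_toReal_le
  have hF1W : ∀ t ∈ Icc (0:ℝ) T, ∀ᵐ s ∂(volume.restrict (Ioc (0:ℝ) t)),
      ENNReal.ofReal (W s) ≤ ENNReal.ofReal C + ENNReal.ofReal M * vmlJ W α s := by
    intro t ht
    filter_upwards [hVWsub t ht.1 ht.2, ae_restrict_mem measurableSet_Ioc] with s hsw hmem
    rw [← hsw]
    exact hF1 s ⟨hmem.1.le, hmem.2.trans ht.2⟩
  -- crude bound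
  have hF4 : ∀ β : ℝ, 1 ≤ β → ∀ t ∈ Icc (0:ℝ) T,
      vmlJ W β t ≤ ENNReal.ofReal ((max 1 T) ^ β)
        * ∫⁻ s in Ioc (0:ℝ) T, ENNReal.ofReal (W s) := by
    intro β hβ t ht
    have hmax1 : (1:ℝ) ≤ max 1 T := le_max_left _ _
    have step1 : vmlJ W β t ≤ ∫⁻ s in Ioc (0:ℝ) t,
        ENNReal.ofReal ((max 1 T) ^ β) * ENNReal.ofReal (W s) := by
      rw [vmlJ]
      refine lintegral_mono_ae ?_
      filter_upwards [ae_restrict_mem measurableSet_Ioc] with s hs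
      have h1 : (t - s) ^ (β - 1) ≤ (max 1 T) ^ β := by
        calc (t - s) ^ (β - 1) ≤ (max 1 T) ^ (β - 1) :=
              Real.rpow_le_rpow (by linarith [hs.2])
                (by linarith [le_max_right (1:ℝ) T, ht.2, hs.1]) (by linarith)
          _ ≤ (max 1 T) ^ β := Real.rpow_le_rpow_of_exponent_le hmax1 (by linarith)
      exact mul_le_mul_left (ENNReal.ofReal_le_ofReal h1) _
    calc vmlJ W β t ≤ _ := step1
      _ = ENNReal.ofReal ((max 1 T) ^ β) * ∫⁻ s in Ioc (0:ℝ) t, ENNReal.ofReal (W s) :=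
          lintegral_const_mul _ (hWmeas.ennreal_ofReal)
      _ ≤ ENNReal.ofReal ((max 1 T) ^ β) * ∫⁻ s in Ioc (0:ℝ) T, ENNReal.ofReal (W s) := by
          gcongr
          exact ht.2
  -- main induction
  have key : ∀ n : ℕ, ∀ t ∈ Icc (0:ℝ) T,
      ENNReal.ofReal (V t)
        ≤ ENNReal.ofReal (C * ∑ k ∈ Finset.range (n+1),
            (M * Real.Gamma α * t ^ α) ^ k / Real.Gamma (k * α + 1))
          + ENNReal.ofReal ((M * Real.Gamma α) ^ (n+1) / Real.Gamma (((n:ℝ)+1) * α))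
            * vmlJ W (((n:ℝ)+1) * α) t := by
    intro n
    induction n with
    | zero =>
      intro t ht
      simp only [Finset.range_one, Finset.sum_singleton, pow_zero, Nat.cast_zero, zero_mul,
        zero_add, Real.Gamma_one, div_one, mul_one, pow_one, one_mul, mul_div_assoc,
        div_self hΓα.ne']
      exact hF1 t ht
    | succ n ih =>
      intro t ht
      have ht0 : 0 ≤ t := ht.1
      have hβpos : (0:ℝ) < ((n:ℝ)+1) * α := by positivity
      set β : ℝ := ((n:ℝ)+1) * α with hβdef
      have hΓβ : 0 < Real.Gamma β := Real.Gamma_pos_of_pos hβpos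
      have hΓβα : 0 < Real.Gamma (β + α) := Real.Gamma_pos_of_pos (by linarith)
      have hmeasK : Measurable fun s : ℝ => ENNReal.ofReal ((t - s) ^ (β - 1)) :=
        ((by fun_prop : Measurable fun s : ℝ => (t - s) ^ (β - 1))).ennreal_ofReal
      -- step A
      have hA : vmlJ W β t ≤ ENNReal.ofReal C * ENNReal.ofReal (t ^ β / β)
          + ENNReal.ofReal M * ∫⁻ s in Ioc (0:ℝ) t,
              ENNReal.ofReal ((t - s) ^ (β - 1)) * vmlJ W α s := by
        have h1 : vmlJ W β t ≤ ∫⁻ s in Ioc (0:ℝ) t,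
            (ENNReal.ofReal ((t - s) ^ (β - 1)) * ENNReal.ofReal C
              + ENNReal.ofReal ((t - s) ^ (β - 1)) * (ENNReal.ofReal M * vmlJ W α s)) := by
          rw [vmlJ]
          refine lintegral_mono_ae ?_
          filter_upwards [hF1W t ht] with s hs
          calc ENNReal.ofReal ((t - s) ^ (β - 1)) * ENNReal.ofReal (W s)
              ≤ ENNReal.ofReal ((t - s) ^ (β - 1))
                  * (ENNReal.ofReal C + ENNReal.ofReal M * vmlJ W α s) := mul_le_mul_right hs _
            _ = _ := mul_add _ _ _
        refine h1.trans (le_of_eq ?_)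
        rw [lintegral_add_left (hmeasK.mul_const _)]
        congr 1
        · rw [lintegral_mul_const _ hmeasK, vml_kernel_lintegral hβpos ht0, mul_comm]
        · rw [← lintegral_const_mul (f := fun s => ENNReal.ofReal ((t - s) ^ (β - 1)) * vmlJ W α s) _ (hmeasK.mul (vmlJ_measurable hWmeas α))]
          exact lintegral_congr fun s => by ring
      have hB := vmlF3 hWmeas hα hβpos ht0
      -- real-number identities
      have hx0 : (0:ℝ) ≤ M * Real.Gamma α := mul_nonneg hM hΓα.le
      have hcst0 : (0:ℝ) ≤ (M * Real.Gamma α) ^ (n+1) / Real.Gamma β := by positivity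
      have htpow : (t ^ α) ^ (n+1) = t ^ β := by
        rw [← Real.rpow_natCast (t ^ α) (n+1), ← Real.rpow_mul ht0]
        congr 1
        push_cast
        ring
      have hr1 : ENNReal.ofReal ((M * Real.Gamma α) ^ (n+1) / Real.Gamma β)
            * (ENNReal.ofReal C * ENNReal.ofReal (t ^ β / β))
          = ENNReal.ofReal (C * ((M * Real.Gamma α * t ^ α) ^ (n+1)
              / Real.Gamma ((((n+1):ℕ):ℝ) * α + 1))) := by
        rw [← ENNReal.ofReal_mul hC, ← ENNReal.ofReal_mul hcst0]
        congr 1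
        have hg : Real.Gamma ((((n+1):ℕ):ℝ) * α + 1) = β * Real.Gamma β := by
          have : (((n+1):ℕ):ℝ) * α = β := by push_cast [hβdef]; ring
          rw [this, Real.Gamma_add_one hβpos.ne']
        rw [hg, mul_pow, mul_pow, htpow]
        field_simp
        ring
      have hr2 : ENNReal.ofReal ((M * Real.Gamma α) ^ (n+1) / Real.Gamma β)
            * (ENNReal.ofReal M
              * ENNReal.ofReal (Real.Gamma β * Real.Gamma α / Real.Gamma (β + α)))
          = ENNReal.ofReal ((M * Real.Gamma α) ^ (n+1+1) / Real.Gamma (β + α)) := by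
        rw [← ENNReal.ofReal_mul hM, ← ENNReal.ofReal_mul hcst0]
        congr 1
        field_simp
        ring
      have hsum_nn : (0:ℝ) ≤ ∑ k ∈ Finset.range (n+1),
          (M * Real.Gamma α * t ^ α) ^ k / Real.Gamma (k * α + 1) := by
        refine Finset.sum_nonneg fun k _ => div_nonneg (pow_nonneg ?_ _)
          (Real.Gamma_pos_of_pos (by positivity)).le
        exact mul_nonneg hx0 (Real.rpow_nonneg ht0 _)
      have haterm_nn : (0:ℝ) ≤ C * ((M * Real.Gamma α * t ^ α) ^ (n+1)
          / Real.Gamma ((((n+1):ℕ):ℝ) * α + 1)) := by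
        refine mul_nonneg hC (div_nonneg (pow_nonneg ?_ _)
          (Real.Gamma_pos_of_pos (by positivity)).le)
        exact mul_nonneg hx0 (Real.rpow_nonneg ht0 _)
      have hcast2 : ((((n+1):ℕ):ℝ) + 1) * α = β + α := by push_cast [hβdef]; ring
      rw [hcast2]
      calc ENNReal.ofReal (V t)
          ≤ ENNReal.ofReal (C * ∑ k ∈ Finset.range (n+1),
              (M * Real.Gamma α * t ^ α) ^ k / Real.Gamma (k * α + 1))
            + ENNReal.ofReal ((M * Real.Gamma α) ^ (n+1) / Real.Gamma β)
              * vmlJ W β t := ih t ht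
        _ ≤ ENNReal.ofReal (C * ∑ k ∈ Finset.range (n+1),
              (M * Real.Gamma α * t ^ α) ^ k / Real.Gamma (k * α + 1))
            + ENNReal.ofReal ((M * Real.Gamma α) ^ (n+1) / Real.Gamma β)
              * (ENNReal.ofReal C * ENNReal.ofReal (t ^ β / β)
                + ENNReal.ofReal M
                  * (ENNReal.ofReal (Real.Gamma β * Real.Gamma α / Real.Gamma (β + α))
                    * vmlJ W (β + α) t)) := by
            gcongr
            exact hA.trans (by gcongr)
        _ = ENNReal.ofReal (C * ∑ k ∈ Finset.range (n+1),
              (M * Real.Gamma α * t ^ α) ^ k / Real.Gamma (k * α + 1))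
            + (ENNReal.ofReal ((M * Real.Gamma α) ^ (n+1) / Real.Gamma β)
                * (ENNReal.ofReal C * ENNReal.ofReal (t ^ β / β))
              + (ENNReal.ofReal ((M * Real.Gamma α) ^ (n+1) / Real.Gamma β)
                  * (ENNReal.ofReal M
                    * ENNReal.ofReal (Real.Gamma β * Real.Gamma α / Real.Gamma (β + α))))
                * vmlJ W (β + α) t) := by ring
        _ = ENNReal.ofReal (C * ∑ k ∈ Finset.range (n+1+1),
              (M * Real.Gamma α * t ^ α) ^ k / Real.Gamma (k * α + 1))
            + ENNReal.ofReal ((M * Real.Gamma α) ^ (n+1+1) / Real.Gamma (β + α))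
              * vmlJ W (β + α) t := by
            rw [hr1, hr2, Finset.sum_range_succ
              (fun k => (M * Real.Gamma α * t ^ α) ^ k / Real.Gamma (k * α + 1)) (n+1),
              mul_add, ENNReal.ofReal_add (mul_nonneg hC hsum_nn) haterm_nn]
            exact (add_assoc _ _ _).symm
  -- conclusion
  intro t ht
  have ht0 : 0 ≤ t := ht.1
  have hx0 : 0 ≤ M * Real.Gamma α * t ^ α :=
    mul_nonneg (mul_nonneg hM hΓα.le) (Real.rpow_nonneg ht0 _)
  have hsum : Summable (fun k : ℕ => (M * Real.Gamma α * t ^ α) ^ k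
      / Real.Gamma (k * α + 1)) := vml_summable hα hx0
  have htermnn : ∀ k : ℕ, 0 ≤ (M * Real.Gamma α * t ^ α) ^ k / Real.Gamma ((k:ℝ) * α + 1) :=
    fun k => div_nonneg (pow_nonneg hx0 _) (Real.Gamma_pos_of_pos (by positivity)).le
  have hWint2 : IntegrableOn W (Ioc (0:ℝ) T) := hWint.mono_set Ioc_subset_Icc_self
  set I0 : ℝ := ∫ s in Ioc (0:ℝ) T, W s with hI0def
  have hI0nn : 0 ≤ I0 := integral_nonneg fun s => hWnonneg s
  have hlin : ∫⁻ s in Ioc (0:ℝ) T, ENNReal.ofReal (W s) = ENNReal.ofReal I0 :=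
    (ofReal_integral_eq_lintegral_ofReal hWint2 (ae_of_all _ hWnonneg)).symm
  have hKc1 : (1:ℝ) ≤ max 1 T := le_max_left _ _
  have hKc0 : (0:ℝ) ≤ max 1 T := by linarith
  have hx00 : 0 ≤ M * Real.Gamma α * (max 1 T) ^ α :=
    mul_nonneg (mul_nonneg hM hΓα.le) (Real.rpow_nonneg hKc0 _)
  have htail0 : Filter.Tendsto
      (fun m : ℕ => (M * Real.Gamma α * (max 1 T) ^ α) ^ m / Real.Gamma (m * α) * I0)
      atTop (nhds 0) := by
    have := (vml_tendsto_pow_div_Gamma hα 0 le_rfl hx00).mul_const I0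
    simpa using this
  have htail : Filter.Tendsto
      (fun n : ℕ => C * (∑' k : ℕ, (M * Real.Gamma α * t ^ α) ^ k / Real.Gamma (k * α + 1))
        + (M * Real.Gamma α * (max 1 T) ^ α) ^ (n+1) / Real.Gamma ((((n+1):ℕ):ℝ) * α) * I0)
      atTop (nhds (C * (∑' k : ℕ, (M * Real.Gamma α * t ^ α) ^ k
        / Real.Gamma (k * α + 1)))) := by
    have h2 := htail0.comp (tendsto_add_atTop_nat 1)
    have h3 := h2.const_add (C * (∑' k : ℕ, (M * Real.Gamma α * t ^ α) ^ k
      / Real.Gamma (k * α + 1)))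
    simpa using h3
  refine ge_of_tendsto htail ?_
  have hevβ : ∀ᶠ n : ℕ in atTop, 1 ≤ ((n:ℝ)+1) * α := by
    have h1 : Filter.Tendsto (fun n : ℕ => ((n:ℝ)+1) * α) atTop atTop :=
      (tendsto_atTop_add_const_right _ 1 tendsto_natCast_atTop_atTop).atTop_mul_const hα
    exact h1.eventually_ge_atTop 1
  filter_upwards [hevβ] with n hn
  have hkey := key n t ht
  have hβpos : (0:ℝ) < ((n:ℝ)+1) * α := by positivity
  have hΓβ : 0 < Real.Gamma (((n:ℝ)+1) * α) := Real.Gamma_pos_of_pos hβpos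
  have hcrude : vmlJ W (((n:ℝ)+1) * α) t
      ≤ ENNReal.ofReal ((max 1 T) ^ (((n:ℝ)+1) * α)) * ENNReal.ofReal I0 := by
    rw [← hlin]
    exact hF4 _ hn t ht
  have hKpow : ((max 1 T) ^ α) ^ (n+1) = (max 1 T) ^ (((n:ℝ)+1) * α) := by
    rw [← Real.rpow_natCast ((max 1 T) ^ α) (n+1), ← Real.rpow_mul hKc0]
    congr 1
    push_cast
    ring
  have hcst0 : (0:ℝ) ≤ (M * Real.Gamma α) ^ (n+1) / Real.Gamma (((n:ℝ)+1) * α) := by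
    positivity
  have hrhs : ENNReal.ofReal ((M * Real.Gamma α) ^ (n+1) / Real.Gamma (((n:ℝ)+1) * α))
        * vmlJ W (((n:ℝ)+1) * α) t
      ≤ ENNReal.ofReal ((M * Real.Gamma α * (max 1 T) ^ α) ^ (n+1)
          / Real.Gamma ((((n+1):ℕ):ℝ) * α) * I0) := by
    calc ENNReal.ofReal ((M * Real.Gamma α) ^ (n+1) / Real.Gamma (((n:ℝ)+1) * α))
          * vmlJ W (((n:ℝ)+1) * α) t
        ≤ ENNReal.ofReal ((M * Real.Gamma α) ^ (n+1) / Real.Gamma (((n:ℝ)+1) * α))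
          * (ENNReal.ofReal ((max 1 T) ^ (((n:ℝ)+1) * α)) * ENNReal.ofReal I0) := by
          gcongr
      _ = ENNReal.ofReal ((M * Real.Gamma α) ^ (n+1) / Real.Gamma (((n:ℝ)+1) * α)
            * ((max 1 T) ^ (((n:ℝ)+1) * α) * I0)) := by
          rw [ENNReal.ofReal_mul hcst0, ENNReal.ofReal_mul (Real.rpow_nonneg hKc0 _)]
      _ = ENNReal.ofReal ((M * Real.Gamma α * (max 1 T) ^ α) ^ (n+1)
            / Real.Gamma ((((n+1):ℕ):ℝ) * α) * I0) := by
          congr 1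
          have hxp : (M * Real.Gamma α * (max 1 T) ^ α) ^ (n+1)
              = (M * Real.Gamma α) ^ (n+1) * (max 1 T) ^ (((n:ℝ)+1) * α) := by
            rw [mul_pow, hKpow]
          have hc : ((((n+1):ℕ)):ℝ) * α = ((n:ℝ)+1) * α := by push_cast; ring
          rw [hxp, hc]
          ring
  have hcomb : ENNReal.ofReal (V t)
      ≤ ENNReal.ofReal (C * ∑ k ∈ Finset.range (n+1),
          (M * Real.Gamma α * t ^ α) ^ k / Real.Gamma (k * α + 1)
        + (M * Real.Gamma α * (max 1 T) ^ α) ^ (n+1)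
          / Real.Gamma ((((n+1):ℕ):ℝ) * α) * I0) := by
    refine hkey.trans ?_
    rw [ENNReal.ofReal_add (mul_nonneg hC (Finset.sum_nonneg fun k _ => htermnn k))
      (by positivity)]
    exact add_le_add_right hrhs _
  have hVle := (ENNReal.ofReal_le_ofReal_iff (by positivity)).1 hcomb
  refine hVle.trans ?_
  have hpart : ∑ k ∈ Finset.range (n+1),
      (M * Real.Gamma α * t ^ α) ^ k / Real.Gamma (k * α + 1)
      ≤ ∑' k : ℕ, (M * Real.Gamma α * t ^ α) ^ k / Real.Gamma (k * α + 1) :=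
    hsum.sum_le_tsum _ (fun k _ => htermnn k)
  have := mul_le_mul_of_nonneg_left hpart hC
  linarith
end

section
/- Let T > 0, 0 < α ≤ 1, and M ≥ 0, and let (d_n)_{n ≥ 1} be a sequence of nonnegative continuous functions on [0, T] such that d₁(t) ≤ (M/α)·t^α for all t ∈ [0, T], and d_{n+1}(t) ≤ M · ∫₀ᵗ (t−s)^(α−1) d_n(s) ds for all n ≥ 1 and all t ∈ [0, T]. Then for every n ≥ 1 and every t ∈ [0, T], d_n(t) ≤ Mⁿ · (Γ(α))ⁿ · t^(nα) / Γ(nα + 1), where Γ is the Gamma function. -/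
open MeasureTheory intervalIntegral Set

lemma real_beta_scaled {a b t : ℝ} (ha : 0 < a) (hb : 0 < b) (ht : 0 < t) :
    ∫ s in (0:ℝ)..t, s ^ (a - 1) * (t - s) ^ (b - 1) =
      Real.Gamma a * Real.Gamma b / Real.Gamma (a + b) * t ^ (a + b - 1) := by
  have hab : (0:ℝ) < a + b := by linarith
  have hΓ : (0:ℝ) < Real.Gamma (a + b) := Real.Gamma_pos_of_pos hab
  have key : ((∫ s in (0:ℝ)..t, s ^ (a - 1) * (t - s) ^ (b - 1) : ℝ) : ℂ)
      = ∫ s in (0:ℝ)..t, (s : ℂ) ^ ((a : ℂ) - 1) * ((t : ℂ) - (s : ℂ)) ^ ((b : ℂ) - 1) := by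
    rw [← intervalIntegral.integral_ofReal]
    refine intervalIntegral.integral_congr fun s hs => ?_
    rw [uIcc_of_le ht.le] at hs
    rw [Complex.ofReal_mul, Complex.ofReal_cpow hs.1,
      Complex.ofReal_cpow (by linarith [hs.2] : (0:ℝ) ≤ t - s)]
    push_cast
    ring
  have h2 : (∫ s in (0:ℝ)..t, (s : ℂ) ^ ((a : ℂ) - 1) * ((t : ℂ) - (s : ℂ)) ^ ((b : ℂ) - 1))
      = (t : ℂ) ^ ((a : ℂ) + (b : ℂ) - 1) * Complex.betaIntegral a b :=
    Complex.betaIntegral_scaled a b ht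
  have h3 : Complex.Gamma a * Complex.Gamma b
      = Complex.Gamma (a + b) * Complex.betaIntegral a b := by
    simpa using Complex.Gamma_mul_Gamma_eq_betaIntegral
      (by simpa using ha) (by simpa using hb)
  have hΓc : Complex.Gamma ((a : ℂ) + (b : ℂ)) ≠ 0 := by
    rw [show ((a : ℂ) + (b : ℂ)) = ((a + b : ℝ) : ℂ) by push_cast; ring, Complex.Gamma_ofReal]
    exact_mod_cast hΓ.ne'
  have h4 : Complex.betaIntegral a b
      = Complex.Gamma a * Complex.Gamma b / Complex.Gamma ((a : ℂ) + (b : ℂ)) := by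
    field_simp
    linear_combination h3.symm
  have : ((∫ s in (0:ℝ)..t, s ^ (a - 1) * (t - s) ^ (b - 1) : ℝ) : ℂ)
      = ((Real.Gamma a * Real.Gamma b / Real.Gamma (a + b) * t ^ (a + b - 1) : ℝ) : ℂ) := by
    rw [key, h2, h4,
      show ((a : ℂ) + (b : ℂ)) = ((a + b : ℝ) : ℂ) by push_cast; ring,
      show (((a + b : ℝ) : ℂ) - 1) = (((a + b - 1 : ℝ)) : ℂ) by push_cast; ring,
      Complex.Gamma_ofReal, Complex.Gamma_ofReal, Complex.Gamma_ofReal,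
      ← Complex.ofReal_cpow ht.le]
    push_cast
    ring
  exact_mod_cast this

/-- Inductive estimate for the successive-approximation increments:
`d_n(t) ≤ Mⁿ (Γ(α))ⁿ t^(nα) / Γ(nα + 1)`. -/
theorem successive_approximation_estimate
    (T α M : ℝ) (hT : 0 < T) (hα : 0 < α) (hα' : α ≤ 1) (hM : 0 ≤ M)
    (d : ℕ → ℝ → ℝ)
    (hd_cont : ∀ n, 1 ≤ n → ContinuousOn (d n) (Icc 0 T))
    (hd_nonneg : ∀ n, 1 ≤ n → ∀ t ∈ Icc 0 T, 0 ≤ d n t)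
    (hd1 : ∀ t ∈ Icc 0 T, d 1 t ≤ M / α * t ^ α)
    (hrec : ∀ n, 1 ≤ n → ∀ t ∈ Icc 0 T,
      d (n + 1) t ≤ M * ∫ s in (0:ℝ)..t, (t - s) ^ (α - 1) * d n s) :
    ∀ n, 1 ≤ n → ∀ t ∈ Icc 0 T,
      d n t ≤ M ^ n * Real.Gamma α ^ n * t ^ ((n : ℝ) * α) / Real.Gamma (n * α + 1) := by
  have hΓα : 0 < Real.Gamma α := Real.Gamma_pos_of_pos hα
  intro n
  induction n with
  | zero => intro h; omega
  | succ n ih =>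
    intro _ t ht
    rcases Nat.eq_zero_or_pos n with hn | hn
    · -- base case n + 1 = 1
      subst hn
      have hd1t := hd1 t ht
      have hΓ : Real.Gamma (((0:ℕ) + 1 : ℕ) * α + 1) = α * Real.Gamma α := by
        push_cast
        rw [one_mul, Real.Gamma_add_one hα.ne']
      rw [hΓ]
      push_cast
      rw [one_mul, pow_one, pow_one]
      calc d 1 t ≤ M / α * t ^ α := hd1t
        _ = M * Real.Gamma α * t ^ α / (α * Real.Gamma α) := by
            field_simp
    · -- inductive step
      have hn1 : 1 ≤ n := hn
      set C : ℝ := M ^ n * Real.Gamma α ^ n / Real.Gamma (n * α + 1) with hC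
      have hΓn : 0 < Real.Gamma ((n : ℝ) * α + 1) :=
        Real.Gamma_pos_of_pos (by positivity)
      have hC0 : 0 ≤ C := by positivity
      rcases eq_or_lt_of_le ht.1 with h0 | h0
      · -- t = 0
        have h0 : t = 0 := h0.symm
        subst h0
        have h1 := hrec n hn1 0 ht
        rw [intervalIntegral.integral_same, mul_zero] at h1
        have h2 : (0:ℝ) ^ (((n:ℕ)+1 : ℕ) * α) = 0 :=
          Real.zero_rpow (by positivity)
        rw [h2]
        simpa using h1
      · -- 0 < t
        have htT : t ≤ T := ht.2
        have hsub : Icc (0:ℝ) t ⊆ Icc 0 T := Icc_subset_Icc le_rfl htT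
        -- integrability
        have hw : IntervalIntegrable (fun s => (t - s) ^ (α - 1)) volume 0 t := by
          have := (intervalIntegrable_rpow' (a := 0) (b := t) (r := α - 1)
            (by linarith)).comp_sub_left t
          simpa using this.symm
        have hint1 : IntervalIntegrable (fun s => (t - s) ^ (α - 1) * d n s) volume 0 t :=
          hw.mul_continuousOn ((hd_cont n hn1).mono (by rw [uIcc_of_le h0.le]; exact hsub))
        have hcontpow : ContinuousOn (fun s : ℝ => C * s ^ ((n:ℝ) * α)) (uIcc 0 t) := by
          apply ContinuousOn.mul continuousOn_const
          apply ContinuousOn.rpow_const continuousOn_id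
          intro x _
          right; positivity
        have hint2 : IntervalIntegrable
            (fun s => (t - s) ^ (α - 1) * (C * s ^ ((n:ℝ) * α))) volume 0 t :=
          hw.mul_continuousOn hcontpow
        have hmono : ∫ s in (0:ℝ)..t, (t - s) ^ (α - 1) * d n s
            ≤ ∫ s in (0:ℝ)..t, (t - s) ^ (α - 1) * (C * s ^ ((n:ℝ) * α)) := by
          apply intervalIntegral.integral_mono_on h0.le hint1 hint2
          intro s hs
          have hs' : s ∈ Icc 0 T := hsub hs
          have hds := ih hn1 s hs'
          have hwpos : (0:ℝ) ≤ (t - s) ^ (α - 1) :=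
            Real.rpow_nonneg (by linarith [hs.2]) _
          apply mul_le_mul_of_nonneg_left _ hwpos
          calc d n s ≤ M ^ n * Real.Gamma α ^ n * s ^ ((n : ℝ) * α)
                / Real.Gamma (n * α + 1) := hds
            _ = C * s ^ ((n:ℝ) * α) := by rw [hC]; ring
        -- evaluate the beta integral
        have hbeta : ∫ s in (0:ℝ)..t, (t - s) ^ (α - 1) * (C * s ^ ((n:ℝ) * α))
            = C * (Real.Gamma ((n:ℝ) * α + 1) * Real.Gamma α
                / Real.Gamma ((n:ℝ) * α + 1 + α) * t ^ ((n:ℝ) * α + 1 + α - 1)) := by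
          rw [← real_beta_scaled (a := (n:ℝ) * α + 1) (b := α) (by positivity) hα h0,
            ← intervalIntegral.integral_const_mul]
          refine intervalIntegral.integral_congr fun s _ => ?_
          have hss : s ^ ((n:ℝ) * α + 1 - 1) = s ^ ((n:ℝ) * α) := by norm_num
          simp only [hss]
          ring
        have hΓpos2 : 0 < Real.Gamma ((n:ℝ) * α + 1 + α) :=
          Real.Gamma_pos_of_pos (by positivity)
        have hfinal := (hrec n hn1 t ht).trans
          (mul_le_mul_of_nonneg_left hmono hM)
        rw [hbeta] at hfinal
        refine hfinal.trans_eq ?_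
        have hΓrec : Real.Gamma ((n:ℝ) * α + 1 + α) = Real.Gamma (((n:ℝ)+1) * α + 1) := by
          congr 1; ring
        have hpow : t ^ ((n:ℝ) * α + 1 + α - 1) = t ^ (((n:ℝ)+1) * α) := by
          congr 1; ring
        rw [hC, hΓrec, hpow]
        push_cast
        have h1 : Real.Gamma ((n:ℝ) * α + 1) ≠ 0 := hΓn.ne'
        have h2 : Real.Gamma (((n:ℝ)+1) * α + 1) ≠ 0 := by
          rw [← hΓrec]; exact hΓpos2.ne'
        field_simp
        ring
end
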